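/- The Fock space F of semi-infinite forms is a cyclic module over the infinite Clifford algebra generated by the vacuum vector: the smallest ℂ-subspace of F containing |0⟩ = e_{H⁻} and invariant under all creation operators v_a and all annihilation operators w_a (a ∈ H) is F itself. -/

import Mathlib

open scoped Classical

/-- The set of half-integers `H = ℤ + 1/2`. -/
def HalfInt : Set ℚ := {q | ∃ n : ℤ, q = (n : ℚ) + 1/2}

/-- The negative half-integers `H⁻`. -/
def Hneg : Set ℚ := {q | q ∈ HalfInt ∧ q < 0}

/-- The positive half-integers `H⁺`. -/
def Hpos : Set ℚ := {q | q ∈ HalfInt ∧ 0 < q}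

/-- A Maya diagram: a set of half-integers whose symmetric difference with `H⁻` is finite. -/
structure Maya where
  carrier : Set ℚ
  subset_halfInt : carrier ⊆ HalfInt
  finite_symmDiff : (symmDiff carrier Hneg).Finite

/-- The Fock space of semi-infinite forms: the free ℂ-vector space on Maya diagrams. -/
abbrev Fock : Type := Maya →₀ ℂ

lemma symmDiff_insert_subset (a : ℚ) (S T : Set ℚ) :
    symmDiff (insert a S) T ⊆ insert a (symmDiff S T) := by
  intro x hx
  simp only [Set.mem_symmDiff, Set.mem_insert_iff] at *
  tauto

lemma symmDiff_diff_subset (a : ℚ) (S T : Set ℚ) :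
    symmDiff (S \ {a}) T ⊆ insert a (symmDiff S T) := by
  intro x hx
  simp only [Set.mem_symmDiff, Set.mem_insert_iff, Set.mem_diff,
    Set.mem_singleton_iff] at *
  tauto

/-- Adding a half-integer to a Maya diagram. -/
def Maya.insertCell (M : Maya) (a : ℚ) (ha : a ∈ HalfInt) : Maya where
  carrier := insert a M.carrier
  subset_halfInt := by
    intro x hx
    rcases hx with rfl | hx
    · exact ha
    · exact M.subset_halfInt hx
  finite_symmDiff :=
    Set.Finite.subset (M.finite_symmDiff.insert a) (symmDiff_insert_subset a _ _)

/-- Removing a half-integer from a Maya diagram. -/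
def Maya.eraseCell (M : Maya) (a : ℚ) : Maya where
  carrier := M.carrier \ {a}
  subset_halfInt := fun _ hx => M.subset_halfInt hx.1
  finite_symmDiff :=
    Set.Finite.subset (M.finite_symmDiff.insert a) (symmDiff_diff_subset a _ _)

/-- The sign `(-1)^{#{x ∈ S : x > a}}`. -/
noncomputable def sgn (S : Set ℚ) (a : ℚ) : ℂ := (-1) ^ (S ∩ Set.Ioi a).ncard

/-- The creation operator `v_a` (exterior multiplication by `v_a`). -/
noncomputable def creation (a : ↥HalfInt) : Fock →ₗ[ℂ] Fock :=
  Finsupp.lift Fock ℂ Maya fun M =>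
    if (a : ℚ) ∈ M.carrier then 0
    else sgn M.carrier a • Finsupp.single (M.insertCell a a.2) 1

/-- The annihilation operator `w_a` (contraction by `w_a`). -/
noncomputable def annihilation (a : ↥HalfInt) : Fock →ₗ[ℂ] Fock :=
  Finsupp.lift Fock ℂ Maya fun M =>
    if (a : ℚ) ∈ M.carrier then sgn M.carrier a • Finsupp.single (M.eraseCell a) 1
    else 0

/-- The Maya diagram `H⁻` of the vacuum. -/
def mayaVac : Maya where
  carrier := Hneg
  subset_halfInt := fun _ hx => hx.1
  finite_symmDiff := by
    simp only [symmDiff_self]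
    exact Set.finite_empty

/-- The vacuum vector `|0⟩ = e_{H⁻} = v_{−1/2} ∧ v_{−3/2} ∧ ⋯`. -/
noncomputable def vacuum : Fock := Finsupp.single mayaVac 1


/-
Every basis vector `e_M` is reached from the vacuum by toggling, one at a time, the finitely many
cells in which `M` differs from `H⁻`: a cell `a ∈ M ∖ H⁻` is created by `v_a`, a cell
`a ∈ H⁻ ∖ M` is annihilated by `w_a`. Each toggle only contributes a sign `±1`, and the basis
vectors span `F`.
-/

lemma Maya.ext {M N : Maya} (h : M.carrier = N.carrier) : M = N := by
  cases M; cases N; simpa using h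

lemma sgn_ne_zero (S : Set ℚ) (a : ℚ) : sgn S a ≠ 0 :=
  pow_ne_zero _ (neg_ne_zero.mpr one_ne_zero)

lemma Maya.insertCell_eraseCell {M : Maya} {a : ℚ} (ha : a ∈ HalfInt) (haM : a ∈ M.carrier) :
    (M.eraseCell a).insertCell a ha = M :=
  Maya.ext (Set.insert_sdiff_self_of_mem haM)

lemma Maya.eraseCell_insertCell {M : Maya} {a : ℚ} (ha : a ∈ HalfInt) (haM : a ∉ M.carrier) :
    (M.insertCell a ha).eraseCell a = M :=
  Maya.ext (Set.insert_sdiff_self_of_notMem haM)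

lemma creation_single (a : ↥HalfInt) (M : Maya) :
    creation a (Finsupp.single M 1) =
      if (a : ℚ) ∈ M.carrier then 0
      else sgn M.carrier a • Finsupp.single (M.insertCell a a.2) 1 := by
  rw [creation, Finsupp.lift_apply, Finsupp.sum_single_index, one_smul]
  exact zero_smul ℂ _

lemma annihilation_single (a : ↥HalfInt) (M : Maya) :
    annihilation a (Finsupp.single M 1) =
      if (a : ℚ) ∈ M.carrier then sgn M.carrier a • Finsupp.single (M.eraseCell a) 1
      else 0 := by
  rw [annihilation, Finsupp.lift_apply, Finsupp.sum_single_index, one_smul]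
  exact zero_smul ℂ _

lemma symmDiff_diff_singleton_of_mem_of_notMem {α : Type*} {S T : Set α} {a : α} (haS : a ∈ S)
    (haT : a ∉ T) : symmDiff (S \ {a}) T = symmDiff S T \ {a} := by
  ext x
  by_cases hx : x = a
  · subst hx; simp [Set.mem_symmDiff, haT]
  · simp [Set.mem_symmDiff, hx]

lemma symmDiff_insert_of_notMem_of_mem {α : Type*} {S T : Set α} {a : α} (haS : a ∉ S)
    (haT : a ∈ T) : symmDiff (insert a S) T = symmDiff S T \ {a} := by
  ext x
  by_cases hx : x = a
  · subst hx; simp [Set.mem_symmDiff, haT]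
  · simp [Set.mem_symmDiff, hx]

section Invariant

variable {p : Submodule ℂ Fock}

lemma single_mem_of_eraseCell_mem
    (hcr : ∀ (a : ↥HalfInt) (x : Fock), x ∈ p → creation a x ∈ p)
    {M : Maya} {a : ℚ} (ha : a ∈ HalfInt) (haM : a ∈ M.carrier)
    (h : Finsupp.single (M.eraseCell a) 1 ∈ p) : Finsupp.single M 1 ∈ p := by
  have hc := hcr ⟨a, ha⟩ _ h
  have haM' : a ∉ (M.eraseCell a).carrier := fun h => h.2 rfl
  rw [creation_single, if_neg haM', Maya.insertCell_eraseCell ha haM] at hc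
  exact (p.smul_mem_iff (sgn_ne_zero _ _)).mp hc

lemma single_mem_of_insertCell_mem
    (han : ∀ (a : ↥HalfInt) (x : Fock), x ∈ p → annihilation a x ∈ p)
    {M : Maya} {a : ℚ} (ha : a ∈ HalfInt) (haM : a ∉ M.carrier)
    (h : Finsupp.single (M.insertCell a ha) 1 ∈ p) : Finsupp.single M 1 ∈ p := by
  have hc := han ⟨a, ha⟩ _ h
  have haM' : a ∈ (M.insertCell a ha).carrier := Set.mem_insert a _
  rw [annihilation_single, if_pos haM', Maya.eraseCell_insertCell ha haM] at hc
  exact (p.smul_mem_iff (sgn_ne_zero _ _)).mp hc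

lemma single_mem_of_vacuum_mem (hvac : vacuum ∈ p)
    (hcr : ∀ (a : ↥HalfInt) (x : Fock), x ∈ p → creation a x ∈ p)
    (han : ∀ (a : ↥HalfInt) (x : Fock), x ∈ p → annihilation a x ∈ p) (M : Maya) :
    Finsupp.single M 1 ∈ p := by
  suffices ∀ S : Set ℚ, S.Finite → ∀ M : Maya, symmDiff M.carrier Hneg = S →
      Finsupp.single M 1 ∈ p from this _ M.finite_symmDiff M rfl
  intro S hS
  induction S, hS using Set.Finite.induction_on with
  | empty =>
    intro M hM
    rwa [Maya.ext (N := mayaVac) (symmDiff_eq_bot.mp hM)]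
  | @insert a S haS _ ih =>
    intro M hM
    have ha : a ∈ symmDiff M.carrier Hneg := hM ▸ Set.mem_insert a S
    have hS : symmDiff M.carrier Hneg \ {a} = S := by
      rw [hM, Set.insert_sdiff_self_of_notMem haS]
    rcases Set.mem_symmDiff.mp ha with ⟨haM, haH⟩ | ⟨haH, haM⟩
    · exact single_mem_of_eraseCell_mem hcr (M.subset_halfInt haM) haM
        (ih _ (by rw [← hS]; exact symmDiff_diff_singleton_of_mem_of_notMem haM haH))
    · exact single_mem_of_insertCell_mem han haH.1 haM
        (ih _ (by rw [← hS]; exact symmDiff_insert_of_notMem_of_mem haM haH))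

end Invariant

/-- the Fock space is a cyclic module over the infinite Clifford
algebra generated by the vacuum vector: the smallest ℂ-subspace of `F`
containing `|0⟩` and invariant under all creation operators `v_a` and all
annihilation operators `w_a` (`a ∈ H`) is `F` itself. -/
theorem fock_cyclic_from_vacuum (p : Submodule ℂ Fock)
    (hvac : vacuum ∈ p)
    (hcr : ∀ (a : ↥HalfInt) (x : Fock), x ∈ p → creation a x ∈ p)
    (han : ∀ (a : ↥HalfInt) (x : Fock), x ∈ p → annihilation a x ∈ p) :
    p = ⊤ := by
  rw [eq_top_iff, ← (Finsupp.basisSingleOne (R := ℂ) (ι := Maya)).span_eq, Submodule.span_le]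
  rintro _ ⟨M, rfl⟩
  exact single_mem_of_vacuum_mem hvac hcr han M
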